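/- arXiv:2503.18561 — 3 statements merged into one kernel-verified Lean document; each statement's English description precedes it below -/
import Mathlib

section
/- Let α be a type, ≺ an irreflexive, transitive relation on α, and X, Y finite sets of elements of α. Writing Min S for the set of ≺-minimal elements of a finite set S, we have Min (X ∪ Y) = Min (Min X ∪ Min Y). (This is the merge property underlying divide-and-conquer computation of Pareto fronts.) -/
/-- The set of `r`-minimal elements of `S`. -/
def minimals {α : Type*} (r : α → α → Prop) (S : Set α) : Set α :=
  {x ∈ S | ¬ ∃ y ∈ S, r y x}

lemma exists_minimal_le {α : Type*} (r : α → α → Prop)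
    (hirr : ∀ x, ¬ r x x) (htrans : ∀ x y z, r x y → r y z → r x z)
    (S : Set α) (hS : S.Finite) :
    ∀ x ∈ S, ∃ z ∈ minimals r S, z = x ∨ r z x := by
  haveI : IsIrrefl α r := ⟨hirr⟩
  haveI : IsTrans α r := ⟨htrans⟩
  haveI : IsStrictOrder α r := { }
  have hwf2 := hS.wellFoundedOn (r := r)
  have key : ∀ p : S, ∃ z ∈ minimals r S, z = (p : α) ∨ r z p := by
    intro p
    induction p using WellFounded.induction hwf2 with
    | _ p ih =>
      obtain ⟨x, hx⟩ := p
      by_cases hmin : ∃ y ∈ S, r y x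
      · obtain ⟨y, hyS, hyx⟩ := hmin
        obtain ⟨z, hz, hcase⟩ := ih ⟨y, hyS⟩ hyx
        rcases hcase with rfl | hzy
        · exact ⟨z, hz, Or.inr hyx⟩
        · exact ⟨z, hz, Or.inr (htrans z y x hzy hyx)⟩
      · exact ⟨x, ⟨hx, hmin⟩, Or.inl rfl⟩
  exact fun x hx => key ⟨x, hx⟩

theorem stmt_6 {α : Type*} (r : α → α → Prop)
    (hirr : ∀ x, ¬ r x x) (htrans : ∀ x y z, r x y → r y z → r x z)
    (X Y : Set α) (hX : X.Finite) (hY : Y.Finite) :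
    minimals r (X ∪ Y) = minimals r (minimals r X ∪ minimals r Y) := by
  ext x
  constructor
  · rintro ⟨hxXY, hnot⟩
    refine ⟨?_, ?_⟩
    · rcases hxXY with hxX | hxY
      · exact Or.inl ⟨hxX, fun ⟨y, hyX, hyx⟩ => hnot ⟨y, Or.inl hyX, hyx⟩⟩
      · exact Or.inr ⟨hxY, fun ⟨y, hyY, hyx⟩ => hnot ⟨y, Or.inr hyY, hyx⟩⟩
    · rintro ⟨y, hy, hyx⟩
      apply hnot
      rcases hy with hyX | hyY
      · exact ⟨y, Or.inl hyX.1, hyx⟩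
      · exact ⟨y, Or.inr hyY.1, hyx⟩
  · rintro ⟨hxM, hnot⟩
    have hxXY : x ∈ X ∪ Y := by
      rcases hxM with h | h
      · exact Or.inl h.1
      · exact Or.inr h.1
    refine ⟨hxXY, ?_⟩
    rintro ⟨y, hyXY, hyx⟩
    rcases hyXY with hyX | hyY
    · obtain ⟨z, hz, hcase⟩ := exists_minimal_le r hirr htrans X hX y hyX
      apply hnot
      rcases hcase with rfl | hzy
      · exact ⟨z, Or.inl hz, hyx⟩
      · exact ⟨z, Or.inl hz, htrans z y x hzy hyx⟩
    · obtain ⟨z, hz, hcase⟩ := exists_minimal_le r hirr htrans Y hY y hyY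
      apply hnot
      rcases hcase with rfl | hzy
      · exact ⟨z, Or.inr hz, hyx⟩
      · exact ⟨z, Or.inr hz, htrans z y x hzy hyx⟩
end

section
/- Let A be a type, B a linear order, n a natural number, F : A → (Fin n → B), s a nonempty finite set of elements of A, and i : Fin n. Then there exists a ∈ s such that: (i) a is Pareto optimal for F on s, i.e. there is no a' ∈ s with F a' ≺ F a; and (ii) a minimizes the i-th objective, i.e. F a i ≤ F a' i for every a' ∈ s. In other words, the minimum of each component objective is attained at some Pareto optimal element. -/
/-- Dominance relation on `Fin n → B` for a linear order `B`. -/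
def dominates {B : Type*} [LinearOrder B] {n : ℕ} (x y : Fin n → B) : Prop :=
  (∀ i, x i ≤ y i) ∧ (∃ i, x i < y i)

/-
Among the minimisers of the `i`-th objective, take one whose objective vector is minimal.
Anything dominating it is again a minimiser of the `i`-th objective, so it is not dominated at all.
-/

lemma dominates_iff_lt {B : Type*} [LinearOrder B] {n : ℕ} (x y : Fin n → B) :
    dominates x y ↔ x < y := by
  rw [Pi.lt_def]
  rfl

lemma Finset.exists_minimalFor_isMinOn_comp {ι α β : Type*} [Preorder α] [LinearOrder β]
    (f : ι → α) {g : α → β} (hg : Monotone g) (s : Finset ι) (hs : s.Nonempty) :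
    ∃ a ∈ s, MinimalFor (· ∈ s) f a ∧ IsMinOn (g ∘ f) s a := by
  classical
  set t := s.filter fun a => IsMinOn (g ∘ f) s a
  have ht : t.Nonempty := by
    obtain ⟨a, ha, hmin⟩ := s.exists_min_image (g ∘ f) hs
    exact ⟨a, Finset.mem_filter.2 ⟨ha, isMinOn_iff.2 hmin⟩⟩
  obtain ⟨a, hat, hmin⟩ := t.finite_toSet.exists_minimalFor f _ ht
  obtain ⟨has, hga⟩ := Finset.mem_filter.1 hat
  refine ⟨a, has, ⟨has, fun j hjs hja => hmin (Finset.mem_filter.2 ⟨hjs, ?_⟩) hja⟩, hga⟩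
  exact isMinOn_iff.2 fun b hb => (hg hja).trans (isMinOn_iff.1 hga b hb)

theorem stmt_8 {A B : Type*} [LinearOrder B] {n : ℕ} (F : A → (Fin n → B))
    (s : Finset A) (hs : s.Nonempty) (i : Fin n) :
    ∃ a ∈ s, (¬ ∃ a' ∈ s, dominates (F a') (F a)) ∧ (∀ a' ∈ s, F a i ≤ F a' i) := by
  obtain ⟨a, has, hmin, hargmin⟩ :=
    s.exists_minimalFor_isMinOn_comp F (Function.monotone_eval i) hs
  refine ⟨a, has, ?_, isMinOn_iff.1 hargmin⟩
  rintro ⟨a', ha's, hdom⟩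
  rw [dominates_iff_lt] at hdom
  exact hdom.not_ge (hmin.2 ha's hdom.le)
end

section
/- Condition (M2) does not imply condition (M1): there exists a measure μ : List ℤ → ℤ such that μ satisfies (M2) — for all nonempty lists l₁, l₂ with every element of l₁ strictly less than every element of l₂, μ l₁ < μ l₂ — yet μ violates (M1): there exist lists l₁, l₂ of equal length with l₁ pointwise ≤ l₂ and μ l₁ > μ l₂. (A witness is any selection function μ that always returns an element of its nonempty argument but whose choice of position depends on the values, e.g. μ (x :: xs) = last of (x :: xs) if x = 0 and x otherwise, with μ [] = 0.) -/
/-!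
Any selection function, i.e. one returning an element of each nonempty list, satisfies (M2),
since `l₁ ≺ᵤ l₂` compares every element of `l₁` with every element of `l₂`. Monotonicity (M1)
fails as soon as the selected position depends on the values: raising a head `0` to `1` in
`[0, 5]` makes the selection jump from the last entry `5` down to the head `1`.
-/

/-- `uprec l₁ l₂`: every element of `l₁` is strictly less than every element of `l₂`. -/
def uprec (l₁ l₂ : List ℤ) : Prop := ∀ x ∈ l₁, ∀ y ∈ l₂, x < y

theorem lt_of_uprec_of_mem_self {μ : List ℤ → ℤ} (hμ : ∀ l, l ≠ [] → μ l ∈ l)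
    {l₁ l₂ : List ℤ} (h₁ : l₁ ≠ []) (h₂ : l₂ ≠ []) (h : uprec l₁ l₂) : μ l₁ < μ l₂ :=
  h _ (hμ l₁ h₁) _ (hμ l₂ h₂)

def headUnlessZero : List ℤ → ℤ
  | [] => 0
  | x :: xs => if x = 0 then (x :: xs).getLast (List.cons_ne_nil _ _) else x

theorem headUnlessZero_mem : ∀ l : List ℤ, l ≠ [] → headUnlessZero l ∈ l
  | x :: xs, _ => by
    rw [headUnlessZero]
    split_ifs
    · exact List.getLast_mem _
    · exact List.mem_cons_self

theorem stmt_13 : ∃ μ : List ℤ → ℤ,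
    (∀ l₁ l₂ : List ℤ, l₁ ≠ [] → l₂ ≠ [] → uprec l₁ l₂ → μ l₁ < μ l₂) ∧
    (∃ l₁ l₂ : List ℤ, List.Forall₂ (· ≤ ·) l₁ l₂ ∧ μ l₂ < μ l₁) :=
  ⟨headUnlessZero, fun _ _ => lt_of_uprec_of_mem_self headUnlessZero_mem,
    [0, 5], [1, 5], by simp, by decide⟩
end
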